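/- Let A and B be associative unital ℂ-algebras. Let e₁, e₂, e₃ ∈ A satisfy e_i·e_j = −δ_{ij}·1 + i·Σ_{k=1}^{3} ϵ_{ijk}·e_k for all i, j ∈ {1,2,3} (where i is the imaginary unit and ϵ_{ijk} is the totally antisymmetric Levi-Civita symbol with ϵ_{123} = 1), and let L₁, L₂, L₃ ∈ B satisfy L_i·L_j − L_j·L_i = Σ_{k=1}^{3} ϵ_{ijk}·L_k. Set Q_r := e_r ⊗ L_r ∈ A ⊗_ℂ B for r = 1,2,3. Then for all distinct i, j ∈ {1,2,3}, with k the remaining index: Q_i·Q_j + Q_j·Q_i = i·Q_k. -/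
import Mathlib


open scoped TensorProduct

/-- The Levi-Civita symbol on three indices (modelled by `Fin 3`, with
`ϵ(0,1,2) = 1` totally antisymmetric). -/
def levi (i j k : Fin 3) : ℤ :=
  if (i, j, k) = (0, 1, 2) ∨ (i, j, k) = (1, 2, 0) ∨ (i, j, k) = (2, 0, 1) then 1
  else if (i, j, k) = (0, 2, 1) ∨ (i, j, k) = (2, 1, 0) ∨ (i, j, k) = (1, 0, 2) then -1
  else 0

lemma leviSum01 {M : Type*} [AddCommGroup M] [Module ℂ M] (x : Fin 3 → M) :
    ∑ k : Fin 3, (levi 0 1 k : ℂ) • x k = x 2 := by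
  rw [Fin.sum_univ_three, show levi 0 1 0 = 0 from by decide,
    show levi 0 1 1 = 0 from by decide,
    show levi 0 1 2 = 1 from by decide]
  simp

lemma leviSum10 {M : Type*} [AddCommGroup M] [Module ℂ M] (x : Fin 3 → M) :
    ∑ k : Fin 3, (levi 1 0 k : ℂ) • x k = -x 2 := by
  rw [Fin.sum_univ_three, show levi 1 0 0 = 0 from by decide,
    show levi 1 0 1 = 0 from by decide,
    show levi 1 0 2 = -1 from by decide]
  simp

lemma leviSum12 {M : Type*} [AddCommGroup M] [Module ℂ M] (x : Fin 3 → M) :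
    ∑ k : Fin 3, (levi 1 2 k : ℂ) • x k = x 0 := by
  rw [Fin.sum_univ_three, show levi 1 2 0 = 1 from by decide,
    show levi 1 2 1 = 0 from by decide,
    show levi 1 2 2 = 0 from by decide]
  simp

lemma leviSum21 {M : Type*} [AddCommGroup M] [Module ℂ M] (x : Fin 3 → M) :
    ∑ k : Fin 3, (levi 2 1 k : ℂ) • x k = -x 0 := by
  rw [Fin.sum_univ_three, show levi 2 1 0 = -1 from by decide,
    show levi 2 1 1 = 0 from by decide,
    show levi 2 1 2 = 0 from by decide]
  simp

lemma leviSum20 {M : Type*} [AddCommGroup M] [Module ℂ M] (x : Fin 3 → M) :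
    ∑ k : Fin 3, (levi 2 0 k : ℂ) • x k = x 1 := by
  rw [Fin.sum_univ_three, show levi 2 0 0 = 0 from by decide,
    show levi 2 0 1 = 1 from by decide,
    show levi 2 0 2 = 0 from by decide]
  simp

lemma leviSum02 {M : Type*} [AddCommGroup M] [Module ℂ M] (x : Fin 3 → M) :
    ∑ k : Fin 3, (levi 0 2 k : ℂ) • x k = -x 1 := by
  rw [Fin.sum_univ_three, show levi 0 2 0 = 0 from by decide,
    show levi 0 2 1 = -1 from by decide,
    show levi 0 2 2 = 0 from by decide]
  simp

lemma quat_key {A : Type*} [Ring A] [Algebra ℂ A]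
    {B : Type*} [Ring B] [Algebra ℂ B]
    (ei ej ek : A) (Li Lj Lk : B) (c : ℂ)
    (h1 : ei * ej = Complex.I • (c • ek))
    (h2 : ej * ei = Complex.I • (-c • ek))
    (h3 : Li * Lj - Lj * Li = c • Lk)
    (hc : c * c = 1) :
    (ei ⊗ₜ[ℂ] Li) * (ej ⊗ₜ[ℂ] Lj) + (ej ⊗ₜ[ℂ] Lj) * (ei ⊗ₜ[ℂ] Li)
      = Complex.I • (ek ⊗ₜ[ℂ] Lk) := by
  have hkey : ek ⊗ₜ[ℂ] (Li * Lj) - ek ⊗ₜ[ℂ] (Lj * Li) = c • (ek ⊗ₜ[ℂ] Lk) := by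
    rw [← TensorProduct.tmul_sub, h3, TensorProduct.tmul_smul]
  calc (ei ⊗ₜ[ℂ] Li) * (ej ⊗ₜ[ℂ] Lj) + (ej ⊗ₜ[ℂ] Lj) * (ei ⊗ₜ[ℂ] Li)
      = (Complex.I * c) • (ek ⊗ₜ[ℂ] (Li * Lj))
        + (Complex.I * -c) • (ek ⊗ₜ[ℂ] (Lj * Li)) := by
        rw [Algebra.TensorProduct.tmul_mul_tmul, Algebra.TensorProduct.tmul_mul_tmul, h1, h2]
        simp only [← TensorProduct.smul_tmul', smul_smul]
    _ = (Complex.I * c) • (ek ⊗ₜ[ℂ] (Li * Lj) - ek ⊗ₜ[ℂ] (Lj * Li)) := by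
        rw [smul_sub, mul_neg, neg_smul, ← sub_eq_add_neg]
    _ = (Complex.I * (c * c)) • (ek ⊗ₜ[ℂ] Lk) := by rw [hkey, smul_smul, mul_assoc]
    _ = Complex.I • (ek ⊗ₜ[ℂ] Lk) := by rw [hc, mul_one]

/-- **Quaternion ⊗ sl(2) realization of the odd part of `A1_ε`.**  If
`e_i·e_j = −δ_{ij}·1 + i·Σ_k ϵ_{ijk}·e_k` in `A` and
`[L_i, L_j] = Σ_k ϵ_{ijk}·L_k` in `B`, then the elements `Q_r = e_r ⊗ L_r` of
`A ⊗_ℂ B` satisfy `Q_i·Q_j + Q_j·Q_i = i·Q_k` for all pairwise distinct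
`i, j, k`. -/
theorem quaternion_sl2_realization
    {A : Type*} [Ring A] [Algebra ℂ A]
    {B : Type*} [Ring B] [Algebra ℂ B]
    (e : Fin 3 → A) (L : Fin 3 → B)
    (he : ∀ i j : Fin 3,
      e i * e j = -(if i = j then (1 : A) else 0)
        + Complex.I • ∑ k : Fin 3, (levi i j k : ℂ) • e k)
    (hL : ∀ i j : Fin 3,
      L i * L j - L j * L i = ∑ k : Fin 3, (levi i j k : ℂ) • L k) :
    ∀ i j k : Fin 3, i ≠ j → j ≠ k → i ≠ k →
      (e i ⊗ₜ[ℂ] L i) * (e j ⊗ₜ[ℂ] L j) + (e j ⊗ₜ[ℂ] L j) * (e i ⊗ₜ[ℂ] L i)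
        = Complex.I • (e k ⊗ₜ[ℂ] L k) := by
  intro i j k hij hjk hik
  fin_cases i <;> fin_cases j <;> fin_cases k <;>
    first
    | exact absurd rfl hij
    | exact absurd rfl hjk
    | exact absurd rfl hik
    | exact quat_key (e 0) (e 1) (e 2) (L 0) (L 1) (L 2) 1
        (by have h := he 0 1; rw [leviSum01] at h; simpa using h)
        (by have h := he 1 0; rw [leviSum10] at h; simpa using h)
        (by have h := hL 0 1; rw [leviSum01] at h; simpa using h)
        (by norm_num)
    | exact quat_key (e 1) (e 0) (e 2) (L 1) (L 0) (L 2) (-1)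
        (by have h := he 1 0; rw [leviSum10] at h; simpa using h)
        (by have h := he 0 1; rw [leviSum01] at h; simpa using h)
        (by have h := hL 1 0; rw [leviSum10] at h; simpa using h)
        (by norm_num)
    | exact quat_key (e 1) (e 2) (e 0) (L 1) (L 2) (L 0) 1
        (by have h := he 1 2; rw [leviSum12] at h; simpa using h)
        (by have h := he 2 1; rw [leviSum21] at h; simpa using h)
        (by have h := hL 1 2; rw [leviSum12] at h; simpa using h)
        (by norm_num)
    | exact quat_key (e 2) (e 1) (e 0) (L 2) (L 1) (L 0) (-1)
        (by have h := he 2 1; rw [leviSum21] at h; simpa using h)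
        (by have h := he 1 2; rw [leviSum12] at h; simpa using h)
        (by have h := hL 2 1; rw [leviSum21] at h; simpa using h)
        (by norm_num)
    | exact quat_key (e 2) (e 0) (e 1) (L 2) (L 0) (L 1) 1
        (by have h := he 2 0; rw [leviSum20] at h; simpa using h)
        (by have h := he 0 2; rw [leviSum02] at h; simpa using h)
        (by have h := hL 2 0; rw [leviSum20] at h; simpa using h)
        (by norm_num)
    | exact quat_key (e 0) (e 2) (e 1) (L 0) (L 2) (L 1) (-1)
        (by have h := he 0 2; rw [leviSum02] at h; simpa using h)
        (by have h := he 2 0; rw [leviSum20] at h; simpa using h)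
        (by have h := hL 0 2; rw [leviSum02] at h; simpa using h)
        (by norm_num)
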